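/- Under the kernel and density assumptions of the kernel moment bound, let f : [0,1]^d → ℝ be L-Lipschitz. Fix x₀ ∈ [0,1]^d and let X̃ have density proportional to K(x₀, ·; h) on [0,1]^d, independent of X. Then there exists a constant L̄₃ < ∞ (depending on d, L, K₀, and the density bounds) such that E[|f(x₀) − f(X)| · K(X̃, X; h)] ≤ L̄₃ h^{d+1}. -/

import Mathlib

/-!
By the triangle inequality through the auxiliary point, `|f x₀ - f x| ≤ L (‖x₀ - x̃‖ + ‖x̃ - x‖)`.
Integrating `K (‖x̃ - x‖ / h)` against the bounded density of `X` and rescaling `x = x̃ + h y`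
bounds the inner expectation, up to the factor `L̄₁ L`, by `h ^ d ‖x₀ - x̃‖ A + h ^ (d + 1) B`,
where `A = ∫ K (‖y‖) dy` and `B = ∫ ‖y‖ K (‖y‖) dy` are finite by polar coordinates. For the
same reason `E ‖x₀ - X̃‖ ≤ h ^ (d + 1) B / Z`, and the normalising constant
`Z = ∫_cube K (‖y - x₀‖ / h) dy` is at least `K 1 (h / (d + 1)) ^ d`, because the cube contains
a box of side `h / (d + 1)` within distance `h` of `x₀`.
-/

open MeasureTheory Set Metric Module
open scoped ENNReal

section RadialKernel

variable {E : Type*} [NormedAddCommGroup E] [NormedSpace ℝ E] [FiniteDimensional ℝ E]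
  [MeasurableSpace E] [BorelSpace E] (μ : Measure E) [μ.IsAddHaarMeasure]

theorem lintegral_comp_dist_div {φ : ℝ → ℝ≥0∞} (hφ : Measurable φ) (c : E) {h : ℝ}
    (hh : 0 < h) :
    ∫⁻ x, φ (dist x c / h) ∂μ = ENNReal.ofReal h ^ finrank ℝ E * ∫⁻ y, φ ‖y‖ ∂μ := by
  have hshift : ∫⁻ x, φ (dist x c / h) ∂μ = ∫⁻ x, φ ‖h⁻¹ • x‖ ∂μ := by
    rw [← lintegral_sub_right_eq_self (fun x => φ ‖h⁻¹ • x‖) c]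
    simp_rw [norm_smul, norm_inv, Real.norm_of_nonneg hh.le, inv_mul_eq_div, dist_eq_norm]
  rw [hshift, ← lintegral_map (f := fun y => φ ‖y‖) (hφ.comp measurable_norm)
      (measurable_const_smul h⁻¹),
    Measure.map_addHaar_smul μ (inv_ne_zero hh.ne'), lintegral_smul_measure, smul_eq_mul,
    inv_pow, inv_inv, abs_of_pos (by positivity), ENNReal.ofReal_pow hh.le]

theorem lintegral_dist_mul_comp_dist_div {K : ℝ → ℝ} (hK : Measurable K) (c : E) {h : ℝ}
    (hh : 0 < h) :
    ∫⁻ x, ENNReal.ofReal (dist x c) * ENNReal.ofReal (K (dist x c / h)) ∂μ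
      = ENNReal.ofReal h ^ (finrank ℝ E + 1)
        * ∫⁻ y, ENNReal.ofReal ‖y‖ * ENNReal.ofReal (K ‖y‖) ∂μ := by
  have hφ : Measurable fun u => ENNReal.ofReal h * (ENNReal.ofReal u * ENNReal.ofReal (K u)) :=
    measurable_const.mul (ENNReal.measurable_ofReal.mul hK.ennreal_ofReal)
  have hrescale : ∀ x, ENNReal.ofReal (dist x c) * ENNReal.ofReal (K (dist x c / h))
      = ENNReal.ofReal h
        * (ENNReal.ofReal (dist x c / h) * ENNReal.ofReal (K (dist x c / h))) := by
    intro x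
    rw [← mul_assoc, ← ENNReal.ofReal_mul hh.le, mul_div_cancel₀ _ hh.ne']
  simp_rw [hrescale]
  rw [lintegral_comp_dist_div μ hφ c hh, lintegral_const_mul' _ _ ENNReal.ofReal_ne_top,
    pow_succ, mul_assoc]

theorem lintegral_norm_mul_comp_norm_lt_top {K : ℝ → ℝ}
    (hK : IntegrableOn (fun u => u ^ finrank ℝ E * K u) (Ioi 0)) :
    ∫⁻ y, ENNReal.ofReal ‖y‖ * ENNReal.ofReal (K ‖y‖) ∂μ < ∞ := by
  simp_rw [← ENNReal.ofReal_mul (norm_nonneg _)]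
  rcases subsingleton_or_nontrivial E with hE | hE
  · simp [Subsingleton.elim _ (0 : E)]
  refine Integrable.lintegral_lt_top
    ((integrable_fun_norm_addHaar μ (f := fun u => u * K u)).2 ?_)
  refine hK.congr_fun (fun u _ => ?_) measurableSet_Ioi
  rw [smul_eq_mul, ← mul_assoc, ← pow_succ, Nat.sub_add_cancel finrank_pos]

theorem lintegral_comp_norm_lt_top {K : ℝ → ℝ} (hK_anti : AntitoneOn K (Ici 0))
    (hK : IntegrableOn (fun u => u ^ finrank ℝ E * K u) (Ioi 0)) :
    ∫⁻ y, ENNReal.ofReal (K ‖y‖) ∂μ < ∞ := by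
  -- near the origin `K ≤ K 0`, away from it `K r ≤ r * K r`
  have hle : ∀ y : E, ENNReal.ofReal (K ‖y‖) ≤
      (closedBall (0 : E) 1).indicator (fun _ => ENNReal.ofReal (K 0)) y
        + ENNReal.ofReal ‖y‖ * ENNReal.ofReal (K ‖y‖) := by
    intro y
    by_cases hy : ‖y‖ ≤ 1
    · rw [indicator_of_mem (by simpa using hy)]
      exact le_add_right (ENNReal.ofReal_le_ofReal
        (hK_anti self_mem_Ici (norm_nonneg y) (norm_nonneg y)))
    · rw [← ENNReal.ofReal_mul (norm_nonneg _)]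
      rcases le_total 0 (K ‖y‖) with hKy | hKy
      · exact le_add_left (ENNReal.ofReal_le_ofReal (le_mul_of_one_le_left hKy (by linarith)))
      · simp [ENNReal.ofReal_of_nonpos hKy]
  calc ∫⁻ y, ENNReal.ofReal (K ‖y‖) ∂μ
      ≤ ∫⁻ y, ((closedBall (0 : E) 1).indicator (fun _ => ENNReal.ofReal (K 0)) y
        + ENNReal.ofReal ‖y‖ * ENNReal.ofReal (K ‖y‖)) ∂μ := lintegral_mono hle
    _ = ENNReal.ofReal (K 0) * μ (closedBall 0 1)
        + ∫⁻ y, ENNReal.ofReal ‖y‖ * ENNReal.ofReal (K ‖y‖) ∂μ := by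
      rw [lintegral_add_left (measurable_const.indicator measurableSet_closedBall),
        lintegral_indicator_const measurableSet_closedBall]
    _ < ∞ := ENNReal.add_lt_top.2 ⟨ENNReal.mul_lt_top ENNReal.ofReal_lt_top
        measure_closedBall_lt_top, lintegral_norm_mul_comp_norm_lt_top μ hK⟩

end RadialKernel

theorem withDensity_le_smul_restrict {α : Type*} [MeasurableSpace α] {μ : Measure α}
    {S : Set α} (hS : MeasurableSet S) {g : α → ℝ} {c : ℝ} (hg_out : ∀ x ∉ S, g x = 0)
    (hg_le : ∀ x ∈ S, g x ≤ c) :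
    μ.withDensity (fun x => ENNReal.ofReal (g x)) ≤ ENNReal.ofReal c • μ.restrict S := by
  rw [← withDensity_const, ← withDensity_indicator hS]
  refine withDensity_mono (Filter.Eventually.of_forall fun x => ?_)
  by_cases hx : x ∈ S
  · simpa [hx] using ENNReal.ofReal_le_ofReal (hg_le x hx)
  · simp [hx, hg_out x hx]

theorem integral_integral_le_toReal_of_lintegral_le {α β : Type*} [MeasurableSpace α]
    [MeasurableSpace β] {ν : Measure α} {μ : Measure β} {G : α → β → ℝ} {M : ℝ≥0∞}
    (hM : M ≠ ∞) (hG : ∫⁻ a, ∫⁻ b, ENNReal.ofReal ‖G a b‖ ∂μ ∂ν ≤ M) :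
    ∫ a, ∫ b, G a b ∂μ ∂ν ≤ M.toReal := by
  refine (Real.le_norm_self _).trans ((norm_integral_le_lintegral_norm _).trans
    (ENNReal.toReal_mono hM ((lintegral_mono fun a => ?_).trans hG)))
  exact (ENNReal.ofReal_le_ofReal (norm_integral_le_lintegral_norm _)).trans
    ENNReal.ofReal_toReal_le

section LocalizedLaw

variable {α : Type*} [PseudoMetricSpace α] [MeasurableSpace α]

noncomputable def localizedMass (μ : Measure α) (S : Set α) (K : ℝ → ℝ) (x₀ : α) (h : ℝ) :
    ℝ≥0∞ :=
  ∫⁻ y in S, ENNReal.ofReal (K (dist y x₀ / h)) ∂μ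

/-- The law of the auxiliary point `X̃`. -/
noncomputable def localizedLaw (μ : Measure α) (S : Set α) (K : ℝ → ℝ) (x₀ : α) (h : ℝ) :
    Measure α :=
  (μ.restrict S).withDensity fun x =>
    ENNReal.ofReal (K (dist x x₀ / h) / ∫ y in S, K (dist y x₀ / h) ∂μ)

variable [OpensMeasurableSpace α] {μ : Measure α} {S : Set α} {K : ℝ → ℝ} {x₀ : α} {h : ℝ}

theorem lintegral_localizedLaw (hK_meas : Measurable K) (hK_nonneg : ∀ u, 0 ≤ K u)
    (hW₀ : localizedMass μ S K x₀ h ≠ 0) (hW : localizedMass μ S K x₀ h ≠ ∞)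
    {g : α → ℝ≥0∞} (hg : Measurable g) :
    ∫⁻ x, g x ∂localizedLaw μ S K x₀ h
      = (∫⁻ x in S, ENNReal.ofReal (K (dist x x₀ / h)) * g x ∂μ) / localizedMass μ S K x₀ h := by
  have hk : Measurable fun x => K (dist x x₀ / h) :=
    hK_meas.comp ((continuous_id.dist continuous_const).measurable.div_const h)
  have hZ : ∫ y in S, K (dist y x₀ / h) ∂μ = (localizedMass μ S K x₀ h).toReal :=
    integral_eq_lintegral_of_nonneg_ae (.of_forall fun _ => hK_nonneg _) hk.aestronglyMeasurable
  have hdensity : (fun x => ENNReal.ofReal (K (dist x x₀ / h) / ∫ y in S, K (dist y x₀ / h) ∂μ))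
      = fun x => ENNReal.ofReal (K (dist x x₀ / h)) * (localizedMass μ S K x₀ h)⁻¹ := by
    funext x
    rw [hZ, ENNReal.ofReal_div_of_pos (ENNReal.toReal_pos hW₀ hW), ENNReal.ofReal_toReal hW,
      div_eq_mul_inv]
  rw [localizedLaw, hdensity, lintegral_withDensity_eq_lintegral_mul _
    (hk.ennreal_ofReal.mul_const _) hg, div_eq_mul_inv,
    ← lintegral_mul_const' _ _ (ENNReal.inv_ne_top.2 hW₀)]
  refine lintegral_congr fun x => ?_
  simp only [Pi.mul_apply]
  ring

theorem localizedLaw_univ (hK_meas : Measurable K) (hK_nonneg : ∀ u, 0 ≤ K u)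
    (hW₀ : localizedMass μ S K x₀ h ≠ 0) (hW : localizedMass μ S K x₀ h ≠ ∞) :
    localizedLaw μ S K x₀ h univ = 1 := by
  rw [← setLIntegral_one, Measure.restrict_univ,
    lintegral_localizedLaw hK_meas hK_nonneg hW₀ hW measurable_const]
  simp_rw [mul_one]
  exact ENNReal.div_self hW₀ hW

end LocalizedLaw

section KernelBounds

variable {E : Type*} [NormedAddCommGroup E] [NormedSpace ℝ E] [FiniteDimensional ℝ E]
  [MeasurableSpace E] [BorelSpace E] {μ : Measure E} [μ.IsAddHaarMeasure]
  {S : Set E} {K : ℝ → ℝ} {x₀ : E} {h : ℝ}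

theorem localizedMass_le (hK : Measurable K) (hh : 0 < h) :
    localizedMass μ S K x₀ h ≤ ENNReal.ofReal h ^ finrank ℝ E * ∫⁻ y, ENNReal.ofReal (K ‖y‖) ∂μ :=
  (setLIntegral_le_lintegral _ _).trans (lintegral_comp_dist_div μ hK.ennreal_ofReal x₀ hh).le

theorem lintegral_dist_localizedLaw_le (hK_meas : Measurable K) (hK_nonneg : ∀ u, 0 ≤ K u)
    (hW₀ : localizedMass μ S K x₀ h ≠ 0) (hW : localizedMass μ S K x₀ h ≠ ∞) (hh : 0 < h) :
    ∫⁻ x, ENNReal.ofReal (dist x x₀) ∂localizedLaw μ S K x₀ h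
      ≤ ENNReal.ofReal h ^ (finrank ℝ E + 1)
          * (∫⁻ y, ENNReal.ofReal ‖y‖ * ENNReal.ofReal (K ‖y‖) ∂μ)
        / localizedMass μ S K x₀ h := by
  rw [lintegral_localizedLaw (g := fun x => ENNReal.ofReal (dist x x₀)) hK_meas hK_nonneg hW₀ hW
      (measurable_id.dist measurable_const).ennreal_ofReal,
    ← lintegral_dist_mul_comp_dist_div μ hK_meas x₀ hh]
  exact ENNReal.div_le_div_right ((setLIntegral_le_lintegral S _).trans_eq
    (lintegral_congr fun x => mul_comm _ _)) _

theorem lintegral_lipschitz_mul_kernel_le (hS : MeasurableSet S) {f : E → ℝ} {Lf : ℝ}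
    (hLf : 0 ≤ Lf) (hf : ∀ x ∈ S, ∀ y ∈ S, |f x - f y| ≤ Lf * dist x y)
    {ρ : Measure E} {L : ℝ≥0∞} (hρ : ρ ≤ L • μ.restrict S) (hK : Measurable K) (hh : 0 < h)
    (hx₀ : x₀ ∈ S) (xt : E) :
    ∫⁻ x, ENNReal.ofReal |f x₀ - f x| * ENNReal.ofReal (K (dist xt x / h)) ∂ρ
      ≤ L * ENNReal.ofReal Lf
        * (ENNReal.ofReal (dist xt x₀)
            * (ENNReal.ofReal h ^ finrank ℝ E * ∫⁻ y, ENNReal.ofReal (K ‖y‖) ∂μ)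
          + ENNReal.ofReal h ^ (finrank ℝ E + 1)
            * ∫⁻ y, ENNReal.ofReal ‖y‖ * ENNReal.ofReal (K ‖y‖) ∂μ) := by
  set κ : E → ℝ≥0∞ := fun x => ENNReal.ofReal (K (dist x xt / h))
  have hκ : Measurable κ :=
    (hK.comp ((measurable_id.dist measurable_const).div_const h)).ennreal_ofReal
  have hpt : ∀ x ∈ S, ENNReal.ofReal |f x₀ - f x| * ENNReal.ofReal (K (dist xt x / h))
      ≤ ENNReal.ofReal Lf
        * (ENNReal.ofReal (dist xt x₀) * κ x + ENNReal.ofReal (dist x xt) * κ x) := by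
    intro x hx
    have htri : |f x₀ - f x| ≤ Lf * (dist xt x₀ + dist x xt) :=
      (hf x₀ hx₀ x hx).trans (mul_le_mul_of_nonneg_left
        ((dist_triangle_left x₀ x xt).trans_eq (by rw [dist_comm xt x])) hLf)
    rw [dist_comm xt x, ← add_mul, ← ENNReal.ofReal_add dist_nonneg dist_nonneg, ← mul_assoc,
      ← ENNReal.ofReal_mul hLf]
    gcongr
  calc ∫⁻ x, ENNReal.ofReal |f x₀ - f x| * ENNReal.ofReal (K (dist xt x / h)) ∂ρ
      ≤ L * ∫⁻ x in S, ENNReal.ofReal |f x₀ - f x| * ENNReal.ofReal (K (dist xt x / h)) ∂μ := by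
        rw [← smul_eq_mul, ← lintegral_smul_measure]
        exact lintegral_mono' hρ le_rfl
    _ ≤ L * ∫⁻ x, ENNReal.ofReal Lf
          * (ENNReal.ofReal (dist xt x₀) * κ x + ENNReal.ofReal (dist x xt) * κ x) ∂μ := by
        refine mul_le_mul_right ((lintegral_mono_ae ?_).trans (setLIntegral_le_lintegral S _)) L
        filter_upwards [ae_restrict_mem hS] with x hx using hpt x hx
    _ = _ := by
        rw [lintegral_const_mul' _ _ ENNReal.ofReal_ne_top,
          lintegral_add_left (f := fun x => ENNReal.ofReal (dist xt x₀) * κ x)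
            (measurable_const.mul hκ),
          lintegral_const_mul _ hκ, lintegral_comp_dist_div μ hK.ennreal_ofReal xt hh,
          lintegral_dist_mul_comp_dist_div μ hK xt hh]
        ring

theorem lintegral_lintegral_lipschitz_mul_kernel_le (hS : MeasurableSet S) {f : E → ℝ}
    {Lf : ℝ} (hLf : 0 ≤ Lf) (hf : ∀ x ∈ S, ∀ y ∈ S, |f x - f y| ≤ Lf * dist x y)
    {ρ : Measure E} {L : ℝ≥0∞} (hρ : ρ ≤ L • μ.restrict S) (hK : Measurable K) (hh : 0 < h)
    (hx₀ : x₀ ∈ S) (ν : Measure E) :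
    ∫⁻ xt, ∫⁻ x, ENNReal.ofReal |f x₀ - f x| * ENNReal.ofReal (K (dist xt x / h)) ∂ρ ∂ν
      ≤ L * ENNReal.ofReal Lf
        * ((∫⁻ xt, ENNReal.ofReal (dist xt x₀) ∂ν)
            * (ENNReal.ofReal h ^ finrank ℝ E * ∫⁻ y, ENNReal.ofReal (K ‖y‖) ∂μ)
          + ENNReal.ofReal h ^ (finrank ℝ E + 1)
            * (∫⁻ y, ENNReal.ofReal ‖y‖ * ENNReal.ofReal (K ‖y‖) ∂μ) * ν univ) := by
  have hd : Measurable fun xt : E => ENNReal.ofReal (dist xt x₀) :=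
    (measurable_id.dist measurable_const).ennreal_ofReal
  refine (lintegral_mono fun xt =>
    lintegral_lipschitz_mul_kernel_le hS hLf hf hρ hK hh hx₀ xt).trans_eq ?_
  rw [lintegral_const_mul _ ((hd.mul_const _).add_const _),
    lintegral_add_right _ measurable_const, lintegral_mul_const _ hd, lintegral_const]

end KernelBounds

section UnitCube

variable {d : ℕ}

def unitCube (d : ℕ) : Set (EuclideanSpace ℝ (Fin d)) := {x | ∀ i, x i ∈ Icc 0 1}

theorem measurableSet_unitCube : MeasurableSet (unitCube d) := by
  unfold unitCube
  measurability

theorem volume_setOf_forall_mem_Icc (a b : Fin d → ℝ) :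
    volume {x : EuclideanSpace ℝ (Fin d) | ∀ i, x i ∈ Icc (a i) (b i)}
      = ∏ i, ENNReal.ofReal (b i - a i) := by
  have hpre : {x : EuclideanSpace ℝ (Fin d) | ∀ i, x i ∈ Icc (a i) (b i)}
      = WithLp.ofLp ⁻¹' univ.pi fun i => Icc (a i) (b i) := by
    ext x
    simp only [mem_ofPred_eq, mem_preimage, mem_univ_pi]
  rw [hpre, (PiLp.volume_preserving_ofLp (Fin d)).measure_preimage
    (by measurability : MeasurableSet (univ.pi fun i => Icc (a i) (b i))).nullMeasurableSet,
    volume_pi_pi]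
  simp [Real.volume_Icc]

theorem ofReal_div_pow_le_volume_unitCube_inter_closedBall {x₀ : EuclideanSpace ℝ (Fin d)}
    (hx₀ : x₀ ∈ unitCube d) {r : ℝ} (hr₀ : 0 ≤ r) (hr₁ : r ≤ 1) :
    ENNReal.ofReal (r / (d + 1)) ^ d ≤ volume (unitCube d ∩ closedBall x₀ r) := by
  set s := r / (d + 1)
  have hs₀ : 0 ≤ s := by positivity
  have hs₁ : s ≤ 1 := div_le_one_of_le₀ (by linarith) (by positivity)
  have hsr : d * s ^ 2 ≤ r ^ 2 := by
    rw [div_pow, mul_div_assoc', div_le_iff₀ (by positivity)]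
    nlinarith [sq_nonneg r, sq_nonneg (d : ℝ)]
  set a : Fin d → ℝ := fun i => min (x₀ i) (1 - s)
  have hbox : {x : EuclideanSpace ℝ (Fin d) | ∀ i, x i ∈ Icc (a i) (a i + s)}
      ⊆ unitCube d ∩ closedBall x₀ r := by
    intro x hx
    have hcoord : ∀ i, dist (x i) (x₀ i) ^ 2 ≤ s ^ 2 := fun i => by
      have := hx i
      have := hx₀ i
      rw [Real.dist_eq, sq_le_sq₀ (abs_nonneg _) hs₀, abs_le]
      constructor <;> simp only [a, mem_Icc, min_le_iff] at * <;> grind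
    refine ⟨fun i => ?_, ?_⟩
    · have := hx i
      have := hx₀ i
      simp only [a, mem_Icc, min_le_iff] at *
      grind
    · rw [mem_closedBall, EuclideanSpace.dist_eq, Real.sqrt_le_left hr₀]
      calc ∑ i, dist (x i) (x₀ i) ^ 2 ≤ ∑ _i : Fin d, s ^ 2 :=
            Finset.sum_le_sum fun i _ => hcoord i
        _ = d * s ^ 2 := by simp
        _ ≤ r ^ 2 := hsr
  calc ENNReal.ofReal s ^ d
      = volume {x : EuclideanSpace ℝ (Fin d) | ∀ i, x i ∈ Icc (a i) (a i + s)} := by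
        simp only [volume_setOf_forall_mem_Icc, add_sub_cancel_left, Finset.prod_const,
          Finset.card_univ, Fintype.card_fin]
    _ ≤ _ := measure_mono hbox

theorem ofReal_mul_ofReal_div_pow_le_localizedMass {K : ℝ → ℝ} (hK : AntitoneOn K (Ici 0))
    {x₀ : EuclideanSpace ℝ (Fin d)} (hx₀ : x₀ ∈ unitCube d) {h : ℝ} (hh₀ : 0 < h)
    (hh₁ : h ≤ 1) :
    ENNReal.ofReal (K 1) * ENNReal.ofReal (h / (d + 1)) ^ d
      ≤ localizedMass volume (unitCube d) K x₀ h := by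
  have hK_le : ∀ y ∈ unitCube d ∩ closedBall x₀ h,
      ENNReal.ofReal (K 1) ≤ ENNReal.ofReal (K (dist y x₀ / h)) := fun y hy =>
    ENNReal.ofReal_le_ofReal (hK (mem_Ici.2 (by positivity)) (mem_Ici.2 zero_le_one)
      ((div_le_one hh₀).2 (mem_closedBall.1 hy.2)))
  calc ENNReal.ofReal (K 1) * ENNReal.ofReal (h / (d + 1)) ^ d
      ≤ ENNReal.ofReal (K 1) * volume (unitCube d ∩ closedBall x₀ h) :=
        mul_le_mul_right (ofReal_div_pow_le_volume_unitCube_inter_closedBall hx₀ hh₀.le hh₁) _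
    _ = ∫⁻ _ in unitCube d ∩ closedBall x₀ h, ENNReal.ofReal (K 1) :=
        (setLIntegral_const _ _).symm
    _ ≤ ∫⁻ y in unitCube d ∩ closedBall x₀ h, ENNReal.ofReal (K (dist y x₀ / h)) :=
        setLIntegral_mono' (measurableSet_unitCube.inter measurableSet_closedBall) hK_le
    _ ≤ localizedMass volume (unitCube d) K x₀ h := lintegral_mono_set inter_subset_left

theorem exists_lintegral_lintegral_localizedLaw_le {f : EuclideanSpace ℝ (Fin d) → ℝ} {Lf : ℝ}
    (hLf : 0 ≤ Lf) (hf : ∀ x ∈ unitCube d, ∀ y ∈ unitCube d, |f x - f y| ≤ Lf * dist x y)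
    {ρ : Measure (EuclideanSpace ℝ (Fin d))} {L : ℝ≥0∞} (hL : L ≠ ∞)
    (hρ : ρ ≤ L • volume.restrict (unitCube d)) {K : ℝ → ℝ} (hK_meas : Measurable K)
    (hK_nonneg : ∀ u, 0 ≤ K u) (hK_anti : AntitoneOn K (Ici 0))
    (hK_int : IntegrableOn (fun u => u ^ d * K u) (Ioi 0)) (hK_one : 0 < K 1) :
    ∃ M : ℝ≥0∞, M ≠ ∞ ∧ ∀ x₀ ∈ unitCube d, ∀ h ∈ Ioc (0 : ℝ) 1,
      ∫⁻ xt, ∫⁻ x, ENNReal.ofReal |f x₀ - f x| * ENNReal.ofReal (K (dist xt x / h)) ∂ρ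
          ∂localizedLaw volume (unitCube d) K x₀ h
        ≤ M * ENNReal.ofReal h ^ (d + 1) := by
  have hK_int' : IntegrableOn (fun u => u ^ finrank ℝ (EuclideanSpace ℝ (Fin d)) * K u)
      (Ioi 0) := by
    rwa [finrank_euclideanSpace_fin]
  set A := ∫⁻ y : EuclideanSpace ℝ (Fin d), ENNReal.ofReal (K ‖y‖)
  set B := ∫⁻ y : EuclideanSpace ℝ (Fin d), ENNReal.ofReal ‖y‖ * ENNReal.ofReal (K ‖y‖)
  set c := ENNReal.ofReal (K 1) * ENNReal.ofReal (1 / (d + 1)) ^ d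
  have hA : A < ∞ := lintegral_comp_norm_lt_top volume hK_anti hK_int'
  have hB : B < ∞ := lintegral_norm_mul_comp_norm_lt_top volume hK_int'
  have hc : c ≠ 0 := by simp [c, hK_one, Nat.cast_add_one_pos]
  refine ⟨L * ENNReal.ofReal Lf * B * (A * c⁻¹ + 1), by finiteness,
    fun x₀ hx₀ h ⟨hh₀, hh₁⟩ => ?_⟩
  set W := localizedMass volume (unitCube d) K x₀ h
  set H := ENNReal.ofReal h
  have hH₀ : H ^ d ≠ 0 := by simp [H, hh₀]
  have hW_lb : c * H ^ d ≤ W := by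
    refine le_of_eq_of_le ?_ (ofReal_mul_ofReal_div_pow_le_localizedMass hK_anti hx₀ hh₀ hh₁)
    rw [div_eq_mul_one_div h, ENNReal.ofReal_mul hh₀.le, mul_pow]
    ring
  have hW_ub : W ≤ H ^ d * A := by
    simpa only [finrank_euclideanSpace_fin] using localizedMass_le (S := unitCube d) hK_meas hh₀
  have hW₀ : W ≠ 0 := ((pos_iff_ne_zero.2 (mul_ne_zero hc hH₀)).trans_le hW_lb).ne'
  have hW : W ≠ ∞ := (hW_ub.trans_lt (by finiteness)).ne
  have hdist : ∫⁻ xt, ENNReal.ofReal (dist xt x₀) ∂localizedLaw volume (unitCube d) K x₀ h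
      ≤ H * B * c⁻¹ :=
    calc _ ≤ H ^ (d + 1) * B / W := by
          simpa only [finrank_euclideanSpace_fin]
            using lintegral_dist_localizedLaw_le hK_meas hK_nonneg hW₀ hW hh₀
      _ ≤ H ^ (d + 1) * B / (c * H ^ d) := ENNReal.div_le_div_left hW_lb _
      _ = H * B * c⁻¹ := by
        rw [pow_succ, mul_comm c, mul_assoc, ENNReal.mul_div_mul_left _ _ hH₀ (by finiteness),
          div_eq_mul_inv]
  calc _ ≤ L * ENNReal.ofReal Lf
          * (H * B * c⁻¹ * (H ^ d * A) + H ^ (d + 1) * B * 1) := by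
        rw [← localizedLaw_univ hK_meas hK_nonneg hW₀ hW]
        grw [← hdist]
        simpa only [finrank_euclideanSpace_fin] using lintegral_lintegral_lipschitz_mul_kernel_le
          measurableSet_unitCube hLf hf hρ hK_meas hh₀ hx₀ (localizedLaw volume (unitCube d) K x₀ h)
    _ = L * ENNReal.ofReal Lf * B * (A * c⁻¹ + 1) * H ^ (d + 1) := by ring

end UnitCube

theorem stmt_12_general (d : ℕ) (L₁' : ℝ)
    (fX : EuclideanSpace ℝ (Fin d) → ℝ)
    (cube : Set (EuclideanSpace ℝ (Fin d)))
    (hcube : cube = {x | ∀ i, x i ∈ Set.Icc (0:ℝ) 1})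
    (hsupp : ∀ x ∉ cube, fX x = 0)
    (hup : ∀ x ∈ cube, fX x ≤ L₁')
    (μ : Measure (EuclideanSpace ℝ (Fin d)))
    (hμ : μ = volume.withDensity fun x => ENNReal.ofReal (fX x))
    (K₀ : ℝ → ℝ)
    (hK₀_nonneg : ∀ u, 0 ≤ K₀ u)
    (hK₀_anti : AntitoneOn K₀ (Set.Ici 0))
    (hK₀_int : IntegrableOn (fun u => u ^ d * K₀ u) (Set.Ioi (0:ℝ)))
    (hK₀_one : 0 < K₀ 1)
    (f : EuclideanSpace ℝ (Fin d) → ℝ) (Lf : ℝ) (hLf : 0 ≤ Lf)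
    (hf_lip : ∀ x ∈ cube, ∀ y ∈ cube, |f x - f y| ≤ Lf * dist x y) :
    ∃ L₃' : ℝ, ∀ x₀ ∈ cube, ∀ h ∈ Set.Ioc (0:ℝ) 1,
      (∫ xt, (∫ x, |f x₀ - f x| * K₀ (dist xt x / h) ∂μ)
          ∂((volume.restrict cube).withDensity fun xt =>
              ENNReal.ofReal (K₀ (dist xt x₀ / h) / ∫ y in cube, K₀ (dist y x₀ / h))))
        ≤ L₃' * h ^ (d + 1) := by
  obtain rfl : cube = unitCube d := hcube
  subst hμ
  -- `K₀` is only monotone on `[0, ∞)`; this extension is antitone, hence measurable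
  set K : ℝ → ℝ := fun u => K₀ (max u 0)
  have hK_anti : Antitone K := fun u v huv =>
    hK₀_anti (le_max_right u 0) (le_max_right v 0) (max_le_max huv le_rfl)
  have hK_eq : ∀ u, 0 ≤ u → K u = K₀ u := fun u hu => by simp only [K, max_eq_left hu]
  obtain ⟨M, hM, hbound⟩ := exists_lintegral_lintegral_localizedLaw_le hLf hf_lip
    (by finiteness) (withDensity_le_smul_restrict measurableSet_unitCube hsupp hup)
    hK_anti.measurable (fun u => hK₀_nonneg _) (hK_anti.antitoneOn _)
    (hK₀_int.congr_fun (fun u hu => by rw [hK_eq u hu.le]) measurableSet_Ioi)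
    (by rwa [hK_eq 1 zero_le_one])
  refine ⟨M.toReal, fun x₀ hx₀ h hh => ?_⟩
  have hK_dist : ∀ a b : EuclideanSpace ℝ (Fin d), K₀ (dist a b / h) = K (dist a b / h) :=
    fun a b => (hK_eq _ (div_nonneg dist_nonneg hh.1.le)).symm
  simp only [hK_dist]
  refine (integral_integral_le_toReal_of_lintegral_le (by finiteness) ((lintegral_mono fun xt =>
    lintegral_mono fun x => le_of_eq ?_).trans (hbound x₀ hx₀ h hh))).trans_eq ?_
  · rw [norm_mul, Real.norm_eq_abs, abs_abs, Real.norm_of_nonneg (hK₀_nonneg _),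
      ENNReal.ofReal_mul (abs_nonneg _)]
  · rw [ENNReal.toReal_mul, ← ENNReal.ofReal_pow hh.1.le,
      ENNReal.toReal_ofReal (pow_nonneg hh.1.le _)]

/-- RLCP localization-bias bound: under the kernel and density assumptions of the
kernel moment bound, if `f` is `Lf`-Lipschitz on `[0,1]^d`, `X ~ μ` and the auxiliary
point `X̃` has density proportional to `K₀(‖· - x₀‖/h)` on `[0,1]^d`, then
`E[|f(x₀) - f(X)| K₀(‖X̃ - X‖/h)] ≤ L₃' h^{d+1}` uniformly in `x₀ ∈ [0,1]^d` and
`h ∈ (0,1]`. -/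
theorem stmt_12 (d : ℕ) (L₁ L₁' : ℝ) (hL₁ : 0 < L₁) (hL₁' : L₁ ≤ L₁')
    (fX : EuclideanSpace ℝ (Fin d) → ℝ) (hfX_meas : Measurable fX)
    (cube : Set (EuclideanSpace ℝ (Fin d)))
    (hcube : cube = {x | ∀ i, x i ∈ Set.Icc (0:ℝ) 1})
    (hsupp : ∀ x ∉ cube, fX x = 0)
    (hlow : ∀ x ∈ cube, L₁ ≤ fX x) (hup : ∀ x ∈ cube, fX x ≤ L₁')
    (μ : Measure (EuclideanSpace ℝ (Fin d)))
    (hμ : μ = volume.withDensity fun x => ENNReal.ofReal (fX x))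
    (hprob : IsProbabilityMeasure μ)
    (K₀ : ℝ → ℝ) (C : ℝ)
    (hK₀_nonneg : ∀ u, 0 ≤ K₀ u) (hK₀_bdd : ∀ u, K₀ u ≤ C)
    (hK₀_anti : AntitoneOn K₀ (Set.Ici 0))
    (hK₀_tail : AntitoneOn (fun u => u * K₀ u) (Set.Ioi 1))
    (hK₀_int : IntegrableOn (fun u => u ^ d * K₀ u) (Set.Ioi (0:ℝ)))
    (hK₀_one : 0 < K₀ 1)
    (f : EuclideanSpace ℝ (Fin d) → ℝ) (Lf : ℝ) (hLf : 0 ≤ Lf)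
    (hf_lip : ∀ x ∈ cube, ∀ y ∈ cube, |f x - f y| ≤ Lf * dist x y) :
    ∃ L₃' : ℝ, ∀ x₀ ∈ cube, ∀ h ∈ Set.Ioc (0:ℝ) 1,
      (∫ xt, (∫ x, |f x₀ - f x| * K₀ (dist xt x / h) ∂μ)
          ∂((volume.restrict cube).withDensity fun xt =>
              ENNReal.ofReal (K₀ (dist xt x₀ / h) / ∫ y in cube, K₀ (dist y x₀ / h))))
        ≤ L₃' * h ^ (d + 1) :=
  stmt_12_general d L₁' fX cube hcube hsupp hup μ hμ K₀ hK₀_nonneg hK₀_anti hK₀_int hK₀_one f Lf hLf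
    hf_lip
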